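/- Let E be a closed aggregate atom of the form α{t₁ : L₁ ; … ; tₙ : Lₙ} = s, where s is an interval-free term. Let E_≤ be the aggregate atom α{t₁ : L₁ ; … ; tₙ : Lₙ} ≤ s and E_≥ be the aggregate atom α{t₁ : L₁ ; … ; tₙ : Lₙ} ≥ s. Then the infinitary propositional formula τE is strongly equivalent to τE_≤ ∧ τE_≥. -/

import Mathlib

namespace AG

/-! Infinitary propositional formulas (Truszczyński), satisfaction, reducts,
stable models, and strong equivalence. Conjunctions and disjunctions over
arbitrary sets of formulas are represented by (Type-valued) indexed families. -/

inductive Formula (σ : Type) : Type 1 where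
  | atom : σ → Formula σ
  | conj : (ι : Type) → (ι → Formula σ) → Formula σ
  | disj : (ι : Type) → (ι → Formula σ) → Formula σ
  | impl : Formula σ → Formula σ → Formula σ

namespace Formula

def bot {σ : Type} : Formula σ := disj Empty (fun e => e.elim)

def top {σ : Type} : Formula σ := conj Empty (fun e => e.elim)

def neg {σ : Type} (F : Formula σ) : Formula σ := impl F bot

def and {σ : Type} (F G : Formula σ) : Formula σ :=
  conj Bool (fun b => if b then F else G)

def or {σ : Type} (F G : Formula σ) : Formula σ :=
  disj Bool (fun b => if b then F else G)

end Formula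

/-- Satisfaction of an infinitary formula by an interpretation `I ⊆ σ`. -/
def Sat {σ : Type} (I : Set σ) : Formula σ → Prop
  | .atom p => p ∈ I
  | .conj _ f => ∀ i, Sat I (f i)
  | .disj _ f => ∃ i, Sat I (f i)
  | .impl F G => Sat I F → Sat I G

open Classical in
/-- The reduct `F^I` of a formula `F` with respect to an interpretation `I`. -/
noncomputable def reduct {σ : Type} (I : Set σ) : Formula σ → Formula σ
  | .atom p => if p ∈ I then .atom p else .bot
  | .conj ι f => .conj ι (fun i => reduct I (f i))
  | .disj ι f => .disj ι (fun i => reduct I (f i))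
  | .impl F G => if Sat I (.impl F G) then .impl (reduct I F) (reduct I G) else .bot

/-- `I` is a stable model of a set `H` of infinitary formulas: `I` is minimal with
respect to set inclusion among the interpretations satisfying the reducts (w.r.t. `I`)
of all formulas in `H`. -/
def IsStableModel {σ : Type} (H : Set (Formula σ)) (I : Set σ) : Prop :=
  (∀ F ∈ H, Sat I (reduct I F)) ∧
  ∀ J : Set σ, J ⊆ I → (∀ F ∈ H, Sat J (reduct I F)) → J = I

/-- Strong equivalence of infinitary formulas: `H ∪ {F}` and `H ∪ {G}` have the same
stable models for every set `H` of formulas. -/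
def StronglyEquivalent {σ : Type} (F G : Formula σ) : Prop :=
  ∀ (H : Set (Formula σ)) (I : Set σ),
    IsStableModel (insert F H) I ↔ IsStableModel (insert G H) I

/-! Terms of Abstract Gringo: numerals, the symbols `inf`/`sup`, symbolic
constants, variables, function terms, arithmetic/interval terms, and tuples. -/

inductive AGOp : Type where
  | add | sub | mul | div | interval

inductive AGTerm : Type where
  | num : ℤ → AGTerm
  | inf : AGTerm
  | sup : AGTerm
  | sym : ℕ → AGTerm
  | var : ℕ → AGTerm
  | fn : ℕ → List AGTerm → AGTerm
  | bin : AGOp → AGTerm → AGTerm → AGTerm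
  | tuple : List AGTerm → AGTerm

mutual

/-- `tval t` is the set `[t]` of values of a ground term `t`. -/
def tval : AGTerm → Set AGTerm
  | AGTerm.num n => {u | u = AGTerm.num n}
  | AGTerm.inf => {u | u = AGTerm.inf}
  | AGTerm.sup => {u | u = AGTerm.sup}
  | AGTerm.sym c => {u | u = AGTerm.sym c}
  | AGTerm.var _ => ∅
  | AGTerm.fn f ts => {u | ∃ rs ∈ tvalList ts, u = AGTerm.fn f rs}
  | AGTerm.bin AGOp.add t₁ t₂ =>
      {u | ∃ n₁ n₂ : ℤ, AGTerm.num n₁ ∈ tval t₁ ∧ AGTerm.num n₂ ∈ tval t₂ ∧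
        u = AGTerm.num (n₁ + n₂)}
  | AGTerm.bin AGOp.sub t₁ t₂ =>
      {u | ∃ n₁ n₂ : ℤ, AGTerm.num n₁ ∈ tval t₁ ∧ AGTerm.num n₂ ∈ tval t₂ ∧
        u = AGTerm.num (n₁ - n₂)}
  | AGTerm.bin AGOp.mul t₁ t₂ =>
      {u | ∃ n₁ n₂ : ℤ, AGTerm.num n₁ ∈ tval t₁ ∧ AGTerm.num n₂ ∈ tval t₂ ∧
        u = AGTerm.num (n₁ * n₂)}
  | AGTerm.bin AGOp.div t₁ t₂ =>
      {u | ∃ n₁ n₂ : ℤ, AGTerm.num n₁ ∈ tval t₁ ∧ AGTerm.num n₂ ∈ tval t₂ ∧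
        n₂ ≠ 0 ∧ u = AGTerm.num (Int.fdiv n₁ n₂)}
  | AGTerm.bin AGOp.interval t₁ t₂ =>
      {u | ∃ m n₁ n₂ : ℤ, AGTerm.num n₁ ∈ tval t₁ ∧ AGTerm.num n₂ ∈ tval t₂ ∧
        n₁ ≤ m ∧ m ≤ n₂ ∧ u = AGTerm.num m}
  | AGTerm.tuple ts => {u | ∃ rs ∈ tvalList ts, u = AGTerm.tuple rs}

/-- `tvalList ts` is the set `[t]` of values of a tuple `t` of ground terms
(componentwise evaluation). -/
def tvalList : List AGTerm → Set (List AGTerm)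
  | [] => {l | l = []}
  | t :: ts => {l | ∃ r ∈ tval t, ∃ rs ∈ tvalList ts, l = r :: rs}

end

/-- A term is ground if it contains no variables. -/
inductive Ground : AGTerm → Prop where
  | num (n : ℤ) : Ground (AGTerm.num n)
  | inf : Ground AGTerm.inf
  | sup : Ground AGTerm.sup
  | sym (c : ℕ) : Ground (AGTerm.sym c)
  | fn (f : ℕ) (ts : List AGTerm) : (∀ t ∈ ts, Ground t) → Ground (AGTerm.fn f ts)
  | bin (o : AGOp) (t₁ t₂ : AGTerm) :
      Ground t₁ → Ground t₂ → Ground (AGTerm.bin o t₁ t₂)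
  | tuple (ts : List AGTerm) : (∀ t ∈ ts, Ground t) → Ground (AGTerm.tuple ts)

/-- A term is precomputed if it contains neither variables nor the symbols
`+ - × / ..`. -/
inductive Precomputed : AGTerm → Prop where
  | num (n : ℤ) : Precomputed (AGTerm.num n)
  | inf : Precomputed AGTerm.inf
  | sup : Precomputed AGTerm.sup
  | sym (c : ℕ) : Precomputed (AGTerm.sym c)
  | fn (f : ℕ) (ts : List AGTerm) :
      (∀ t ∈ ts, Precomputed t) → Precomputed (AGTerm.fn f ts)
  | tuple (ts : List AGTerm) :
      (∀ t ∈ ts, Precomputed t) → Precomputed (AGTerm.tuple ts)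

/-- A term is interval-free if it does not contain the symbol `..`. -/
inductive IntervalFree : AGTerm → Prop where
  | num (n : ℤ) : IntervalFree (AGTerm.num n)
  | inf : IntervalFree AGTerm.inf
  | sup : IntervalFree AGTerm.sup
  | sym (c : ℕ) : IntervalFree (AGTerm.sym c)
  | var (v : ℕ) : IntervalFree (AGTerm.var v)
  | fn (f : ℕ) (ts : List AGTerm) :
      (∀ t ∈ ts, IntervalFree t) → IntervalFree (AGTerm.fn f ts)
  | bin (o : AGOp) (t₁ t₂ : AGTerm) : o ≠ AGOp.interval →
      IntervalFree t₁ → IntervalFree t₂ → IntervalFree (AGTerm.bin o t₁ t₂)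
  | tuple (ts : List AGTerm) :
      (∀ t ∈ ts, IntervalFree t) → IntervalFree (AGTerm.tuple ts)

/-- The variable `v` occurs in the term. -/
inductive VarOccurs (v : ℕ) : AGTerm → Prop where
  | var : VarOccurs v (AGTerm.var v)
  | fn {f : ℕ} {ts : List AGTerm} {t : AGTerm} :
      t ∈ ts → VarOccurs v t → VarOccurs v (AGTerm.fn f ts)
  | binLeft {o : AGOp} {t₁ t₂ : AGTerm} :
      VarOccurs v t₁ → VarOccurs v (AGTerm.bin o t₁ t₂)
  | binRight {o : AGOp} {t₁ t₂ : AGTerm} :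
      VarOccurs v t₂ → VarOccurs v (AGTerm.bin o t₁ t₂)
  | tuple {ts : List AGTerm} {t : AGTerm} :
      t ∈ ts → VarOccurs v t → VarOccurs v (AGTerm.tuple ts)

/-- The substitution mapping the variables in the list `xs` to the corresponding
members of the list `rs` (and every other variable to itself). -/
def assign (xs : List ℕ) (rs : List AGTerm) (v : ℕ) : AGTerm :=
  ((xs.zip rs).lookup v).getD (AGTerm.var v)

/-- Applying a substitution to a term. -/
def subst (ρ : ℕ → AGTerm) : AGTerm → AGTerm
  | AGTerm.num n => AGTerm.num n
  | AGTerm.inf => AGTerm.inf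
  | AGTerm.sup => AGTerm.sup
  | AGTerm.sym c => AGTerm.sym c
  | AGTerm.var v => ρ v
  | AGTerm.fn f ts => AGTerm.fn f (ts.attach.map (fun x => subst ρ x.1))
  | AGTerm.bin o t₁ t₂ => AGTerm.bin o (subst ρ t₁) (subst ρ t₂)
  | AGTerm.tuple ts => AGTerm.tuple (ts.attach.map (fun x => subst ρ x.1))
termination_by t => sizeOf t
decreasing_by
  all_goals simp_wf
  all_goals try (cases x; simp_all)
  all_goals first
    | (rename_i hmem; have := List.sizeOf_lt_of_mem hmem; omega)
    | omega

/-- The assumed total order on precomputed terms: `inf` is its least element,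
`sup` is its greatest element, and numerals are ordered according to their
integers. -/
structure AGOrder : Type where
  le : AGTerm → AGTerm → Prop
  refl : ∀ t : AGTerm, Precomputed t → le t t
  trans : ∀ a b c : AGTerm, Precomputed a → Precomputed b → Precomputed c →
    le a b → le b c → le a c
  antisymm : ∀ a b : AGTerm, Precomputed a → Precomputed b →
    le a b → le b a → a = b
  total : ∀ a b : AGTerm, Precomputed a → Precomputed b → le a b ∨ le b a
  inf_le : ∀ t : AGTerm, Precomputed t → le AGTerm.inf t
  le_sup : ∀ t : AGTerm, Precomputed t → le t AGTerm.sup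
  num_le_num : ∀ m n : ℤ, le (AGTerm.num m) (AGTerm.num n) ↔ m ≤ n

/-- The strict order associated with the total order on precomputed terms. -/
def AGOrder.lt (o : AGOrder) (a b : AGTerm) : Prop := o.le a b ∧ a ≠ b

/-- Tuples of precomputed terms of length `k`. -/
def PTuple (k : ℕ) : Type :=
  {r : List AGTerm // r.length = k ∧ ∀ u ∈ r, Precomputed u}

/-- The data of the aggregate elements `t₁ : L₁ ; … ; tₙ : Lₙ` of an aggregate
atom: for each `i`, the list `xᵢ` of variables of `tᵢ : Lᵢ`, the tuple `tᵢ` of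
terms, and the function sending a tuple `r` of precomputed terms (to be
substituted for `xᵢ`) to the infinitary formula `τ∨((Lᵢ)ʳ_{xᵢ})`. -/
structure AggAtom (σ : Type) where
  n : ℕ
  x : Fin n → List ℕ
  t : Fin n → List AGTerm
  L : (i : Fin n) → List AGTerm → Formula σ

/-- The index set `A = {(i, r) : 1 ≤ i ≤ n, r ∈ Aᵢ}`, where `Aᵢ` is the set of
tuples of precomputed terms of the same length as `xᵢ`. -/
def Idx {σ : Type} (E : AggAtom σ) : Type :=
  Σ i : Fin E.n, PTuple (E.x i).length

/-- `[(tᵢ)ʳ_{xᵢ}]` for `a = (i, r) ∈ A`. -/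
def elemVal {σ : Type} (E : AggAtom σ) (a : Idx E) : Set (List AGTerm) :=
  tvalList ((E.t a.1).map (subst (assign (E.x a.1) a.2.1)))

/-- `[Δ]`: the union of the sets `[(tᵢ)ʳ_{xᵢ}]` over `(i, r) ∈ Δ`. -/
def deltaVal {σ : Type} (E : AggAtom σ) (Δ : Set (Idx E)) : Set (List AGTerm) :=
  ⋃ a ∈ Δ, elemVal E a

/-- `τ∨((Lᵢ)ʳ_{xᵢ})` for `a = (i, r) ∈ A`. -/
def fml {σ : Type} (E : AggAtom σ) (a : Idx E) : Formula σ :=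
  E.L a.1 a.2.1

/-- `Δ` justifies the aggregate atom `α{t₁ : L₁ ; … ; tₙ : Lₙ} ≺ s`: the
relation `cmp` (the one denoted by `≺`) holds between `α̂[Δ]` and at least one
precomputed term `u ∈ [s]`. -/
def Justifies {σ : Type} (E : AggAtom σ) (alphaHat : Set (List AGTerm) → AGTerm)
    (cmp : AGTerm → AGTerm → Prop) (s : AGTerm) (Δ : Set (Idx E)) : Prop :=
  ∃ u ∈ tval s, cmp (alphaHat (deltaVal E Δ)) u

/-- `τE`: the conjunction, over all `Δ ⊆ A` that do not justify `E`, of the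
implications `⋀_{(i,r)∈Δ} τ∨((Lᵢ)ʳ_{xᵢ}) → ⋁_{(i,r)∈A∖Δ} τ∨((Lᵢ)ʳ_{xᵢ})`. -/
def tauAgg {σ : Type} (E : AggAtom σ) (justifies : Set (Idx E) → Prop) :
    Formula σ :=
  Formula.conj {Δ : Set (Idx E) // ¬ justifies Δ} (fun Δ =>
    Formula.impl
      (Formula.conj {a : Idx E // a ∈ Δ.1} (fun a => fml E a.1))
      (Formula.disj {a : Idx E // a ∉ Δ.1} (fun a => fml E a.1)))

/-! Since `s` contains no interval, `[s]` has at most one element, and `α̂[Δ]` and the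
members of `[s]` are precomputed; so by antisymmetry of the order, `Δ` justifies `E` iff it
justifies both `E_≤` and `E_≥`. The conjuncts of `τE` are therefore exactly those of `τE_≤`
together with those of `τE_≥`, and the two formulas have equivalent reducts with respect to
every interpretation, which already implies strong equivalence. -/

mutual

theorem precomputed_of_mem_tval : ∀ {t u : AGTerm}, u ∈ tval t → Precomputed u
  | .num _, _, rfl => .num _
  | .inf, _, rfl => .inf
  | .sup, _, rfl => .sup
  | .sym _, _, rfl => .sym _
  | .fn _ _, _, ⟨_, hrs, rfl⟩ => .fn _ _ fun _ hr => precomputed_of_mem_tvalList hrs hr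
  | .bin .add _ _, _, ⟨_, _, _, _, rfl⟩ => .num _
  | .bin .sub _ _, _, ⟨_, _, _, _, rfl⟩ => .num _
  | .bin .mul _ _, _, ⟨_, _, _, _, rfl⟩ => .num _
  | .bin .div _ _, _, ⟨_, _, _, _, _, rfl⟩ => .num _
  | .bin .interval _ _, _, ⟨_, _, _, _, _, _, _, rfl⟩ => .num _
  | .tuple _, _, ⟨_, hrs, rfl⟩ => .tuple _ fun _ hr => precomputed_of_mem_tvalList hrs hr

theorem precomputed_of_mem_tvalList :
    ∀ {ts l : List AGTerm}, l ∈ tvalList ts → ∀ {u : AGTerm}, u ∈ l → Precomputed u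
  | [], _, rfl, _, hu => absurd hu List.not_mem_nil
  | _ :: _, _, ⟨_, hr, _, hrs, rfl⟩, _, hu => by
      rcases List.mem_cons.mp hu with rfl | hu
      · exact precomputed_of_mem_tval hr
      · exact precomputed_of_mem_tvalList hrs hu

end

mutual

theorem tval_subsingleton : ∀ {t : AGTerm}, IntervalFree t → (tval t).Subsingleton
  | .num _, _, _, rfl, _, rfl => rfl
  | .inf, _, _, rfl, _, rfl => rfl
  | .sup, _, _, rfl, _, rfl => rfl
  | .sym _, _, _, rfl, _, rfl => rfl
  | .fn _ _, .fn _ _ h, _, ⟨_, hrs, rfl⟩, _, ⟨_, hrs', rfl⟩ => by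
      rw [tvalList_subsingleton h hrs hrs']
  | .bin .add _ _, .bin _ _ _ _ h₁ h₂, _, ⟨_, _, ha, hb, rfl⟩, _, ⟨_, _, ha', hb', rfl⟩ => by
      cases tval_subsingleton h₁ ha ha'; cases tval_subsingleton h₂ hb hb'; rfl
  | .bin .sub _ _, .bin _ _ _ _ h₁ h₂, _, ⟨_, _, ha, hb, rfl⟩, _, ⟨_, _, ha', hb', rfl⟩ => by
      cases tval_subsingleton h₁ ha ha'; cases tval_subsingleton h₂ hb hb'; rfl
  | .bin .mul _ _, .bin _ _ _ _ h₁ h₂, _, ⟨_, _, ha, hb, rfl⟩, _, ⟨_, _, ha', hb', rfl⟩ => by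
      cases tval_subsingleton h₁ ha ha'; cases tval_subsingleton h₂ hb hb'; rfl
  | .bin .div _ _, .bin _ _ _ _ h₁ h₂, _, ⟨_, _, ha, hb, _, rfl⟩, _, ⟨_, _, ha', hb', _, rfl⟩ => by
      cases tval_subsingleton h₁ ha ha'; cases tval_subsingleton h₂ hb hb'; rfl
  | .bin .interval _ _, .bin _ _ _ hne _ _, _, _, _, _ => absurd rfl hne
  | .tuple _, .tuple _ h, _, ⟨_, hrs, rfl⟩, _, ⟨_, hrs', rfl⟩ => by
      rw [tvalList_subsingleton h hrs hrs']

theorem tvalList_subsingleton :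
    ∀ {ts : List AGTerm}, (∀ t ∈ ts, IntervalFree t) → (tvalList ts).Subsingleton
  | [], _, _, rfl, _, rfl => rfl
  | t :: _, h, _, ⟨_, hr, _, hrs, rfl⟩, _, ⟨_, hr', _, hrs', rfl⟩ => by
      rw [tval_subsingleton (h t List.mem_cons_self) hr hr',
        tvalList_subsingleton (fun u hu => h u (List.mem_cons_of_mem t hu)) hrs hrs']

end

theorem AGOrder.exists_eq_iff_exists_le_and_exists_ge (o : AGOrder) {S : Set AGTerm}
    (hS : S.Subsingleton) (hpre : ∀ u ∈ S, Precomputed u) {v : AGTerm} (hv : Precomputed v) :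
    (∃ u ∈ S, v = u) ↔ (∃ u ∈ S, o.le v u) ∧ (∃ u ∈ S, o.le u v) := by
  constructor
  · rintro ⟨u, hu, rfl⟩
    exact ⟨⟨v, hu, o.refl v hv⟩, ⟨v, hu, o.refl v hv⟩⟩
  · rintro ⟨⟨u, hu, hvu⟩, ⟨u', hu', hu'v⟩⟩
    cases hS hu hu'
    exact ⟨u, hu, o.antisymm v u hv (hpre u hu) hvu hu'v⟩

theorem justifies_eq_iff {σ : Type} (ord : AGOrder) (E : AggAtom σ)
    {alphaHat : Set (List AGTerm) → AGTerm} (halpha : ∀ T, Precomputed (alphaHat T))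
    {s : AGTerm} (hs : IntervalFree s) (Δ : Set (Idx E)) :
    Justifies E alphaHat (· = ·) s Δ ↔
      Justifies E alphaHat ord.le s Δ ∧ Justifies E alphaHat (fun a b => ord.le b a) s Δ :=
  ord.exists_eq_iff_exists_le_and_exists_ge (tval_subsingleton hs)
    (fun _ => precomputed_of_mem_tval) (halpha _)

theorem sat_reduct_and {σ : Type} (I J : Set σ) (F G : Formula σ) :
    Sat J (reduct I (F.and G)) ↔ Sat J (reduct I F) ∧ Sat J (reduct I G) := by
  simp only [Formula.and, reduct, Sat, Bool.forall_bool, Bool.false_eq_true, if_false, if_true,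
    and_comm]

theorem sat_reduct_conj_not_and {σ α : Type} (f : α → Formula σ) (p q : α → Prop)
    (I J : Set σ) :
    Sat J (reduct I (.conj {a // ¬(p a ∧ q a)} fun a => f a.1)) ↔
      Sat J (reduct I (.conj {a // ¬p a} fun a => f a.1)) ∧
        Sat J (reduct I (.conj {a // ¬q a} fun a => f a.1)) := by
  simp only [reduct, Sat, Subtype.forall, not_and_or, or_imp, forall_and]

theorem StronglyEquivalent.of_sat_reduct_iff {σ : Type} {F G : Formula σ}
    (h : ∀ I J : Set σ, Sat J (reduct I F) ↔ Sat J (reduct I G)) :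
    StronglyEquivalent F G := by
  intro H I
  simp only [IsStableModel, Set.forall_mem_insert, h]

theorem stronglyEquivalent_tauAgg_and {σ : Type} (E : AggAtom σ) (p q : Set (Idx E) → Prop) :
    StronglyEquivalent (tauAgg E fun Δ => p Δ ∧ q Δ) ((tauAgg E p).and (tauAgg E q)) :=
  .of_sat_reduct_iff fun I J => by
    rw [sat_reduct_and]
    exact sat_reduct_conj_not_and (fun Δ => Formula.impl
      (Formula.conj {a : Idx E // a ∈ Δ} (fun a => fml E a.1))
      (Formula.disj {a : Idx E // a ∉ Δ} (fun a => fml E a.1))) p q I J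

/-- **Theorem 1 (eliminating equality from aggregate atoms).**
Let `E` be a closed aggregate atom of the form `α{t₁ : L₁ ; … ; tₙ : Lₙ} = s`,
where `s` is an interval-free (ground) term.  If `E_≤` and `E_≥` are obtained
from `E` by replacing `=` with `≤` and `≥` respectively, then `τE` is strongly
equivalent to `τE_≤ ∧ τE_≥`. -/
theorem equality_elimination {σ : Type} (ord : AGOrder) (E : AggAtom σ)
    (hclosed : ∀ i : Fin E.n, ∀ u ∈ E.t i, ∀ v : ℕ, VarOccurs v u → v ∈ E.x i)
    (alphaHat : Set (List AGTerm) → AGTerm)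
    (halpha : ∀ T : Set (List AGTerm), Precomputed (alphaHat T))
    (s : AGTerm) (hground : Ground s) (hif : IntervalFree s) :
    StronglyEquivalent
      (tauAgg E (Justifies E alphaHat (fun a b => a = b) s))
      (Formula.and
        (tauAgg E (Justifies E alphaHat ord.le s))
        (tauAgg E (Justifies E alphaHat (fun a b => ord.le b a) s))) := by
  have hsplit : Justifies E alphaHat (fun a b => a = b) s = fun Δ =>
      Justifies E alphaHat ord.le s Δ ∧ Justifies E alphaHat (fun a b => ord.le b a) s Δ :=
    funext fun Δ => propext (justifies_eq_iff ord E halpha hif Δ)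
  rw [hsplit]
  exact stronglyEquivalent_tauAgg_and E _ _

end AG
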